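/- For every m with 1 < m < 2 there exists a constant κ_m > 0 such that for all vectors ξ, η in ℝ^N: |ξ - η|^m ≤ κ_m [(|ξ|^{m-2}ξ - |η|^{m-2}η) · (ξ - η)]^{m/2} (|ξ|^m + |η|^m)^{(2-m)/2}. -/

import Mathlib

/-!
Write `a = ‖ξ‖`, `b = ‖η‖`, `t = ⟪ξ, η⟫`. The heart of the matter is the monotonicity estimate
`(m - 1) ‖ξ - η‖² (a + b)^(m-2) ≤ ⟪a^(m-2) ξ - b^(m-2) η, ξ - η⟫`.
Both sides are affine in `t`, and their difference is
`[(a - b)(a^(m-1) - b^(m-1)) - (m - 1)(a - b)²(a + b)^(m-2)]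
  + (ab - t)(a^(m-2) + b^(m-2) - 2(m - 1)(a + b)^(m-2))`.
The first bracket is nonnegative by concavity of `s ↦ s^(m-1)`, the second product by
Cauchy–Schwarz and `(a + b)^(m-2) ≤ min (a^(m-2)) (b^(m-2))`. Raising the estimate to the power
`m / 2` and using `(a + b)^m ≤ 2^(m-1) (a^m + b^m)` gives the inequality with
`κ = (m - 1)^(-m/2) 2^((m-1)(2-m)/2)`.
-/

open Real

namespace Real

lemma rpow_le_rpow_add_mul_rpow_sub_one_mul_sub {p a b : ℝ} (hp0 : 0 ≤ p) (hp1 : p ≤ 1)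
    (ha : 0 < a) (hb : 0 ≤ b) : b ^ p ≤ a ^ p + p * a ^ (p - 1) * (b - a) := by
  have hbern : (b / a) ^ p ≤ 1 + p * (b / a - 1) := by
    have := rpow_one_add_le_one_add_mul_self (s := b / a - 1)
      (by linarith [div_nonneg hb ha.le]) hp0 hp1
    rwa [add_sub_cancel] at this
  calc b ^ p = a ^ p * (b / a) ^ p := by
        rw [div_rpow hb ha.le, mul_div_cancel₀ _ (rpow_pos_of_pos ha p).ne']
    _ ≤ a ^ p * (1 + p * (b / a - 1)) := by gcongr
    _ = a ^ p + p * a ^ (p - 1) * (b - a) := by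
        rw [rpow_sub_one ha.ne']
        field_simp

lemma mul_sub_mul_add_rpow_sub_one_le_rpow_sub_rpow {p a b : ℝ} (hp0 : 0 ≤ p) (hp1 : p ≤ 1)
    (hb : 0 ≤ b) (hba : b ≤ a) : p * (a - b) * (a + b) ^ (p - 1) ≤ a ^ p - b ^ p := by
  rcases hba.eq_or_lt with rfl | hlt
  · simp
  have ha : 0 < a := hb.trans_lt hlt
  have htangent := rpow_le_rpow_add_mul_rpow_sub_one_mul_sub hp0 hp1 ha hb
  calc p * (a - b) * (a + b) ^ (p - 1) ≤ p * (a - b) * a ^ (p - 1) :=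
        mul_le_mul_of_nonneg_left (rpow_le_rpow_of_nonpos ha (by linarith) (by linarith))
          (mul_nonneg hp0 (by linarith))
    _ ≤ a ^ p - b ^ p := by linarith

lemma mul_sq_sub_mul_add_rpow_sub_one_le_sub_mul_rpow_sub_rpow {p a b : ℝ} (hp0 : 0 ≤ p)
    (hp1 : p ≤ 1) (ha : 0 ≤ a) (hb : 0 ≤ b) :
    p * (a - b) ^ 2 * (a + b) ^ (p - 1) ≤ (a - b) * (a ^ p - b ^ p) := by
  rcases le_total b a with hba | hab
  · have := mul_sub_mul_add_rpow_sub_one_le_rpow_sub_rpow hp0 hp1 hb hba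
    nlinarith
  · have := mul_sub_mul_add_rpow_sub_one_le_rpow_sub_rpow hp0 hp1 ha hab
    rw [add_comm b a] at this
    nlinarith

lemma rpow_add_le_mul_rpow_add_rpow {p a b : ℝ} (ha : 0 ≤ a) (hb : 0 ≤ b) (hp : 1 ≤ p) :
    (a + b) ^ p ≤ 2 ^ (p - 1) * (a ^ p + b ^ p) := by
  lift a to NNReal using ha
  lift b to NNReal using hb
  exact_mod_cast NNReal.rpow_add_le_mul_rpow_add_rpow a b hp

lemma rpow_le_of_mul_sq_mul_rpow_le {m c x s A : ℝ} (hm : 0 ≤ m) (hc : 0 < c) (hx : 0 ≤ x)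
    (hs : 0 < s) (h : c * x ^ 2 * s ^ (m - 2) ≤ A) :
    x ^ m ≤ c⁻¹ ^ (m / 2) * A ^ (m / 2) * (s ^ m) ^ ((2 - m) / 2) := by
  have hA : 0 ≤ A := le_trans (by positivity) h
  have hsq : x ^ 2 ≤ c⁻¹ * A * s ^ (2 - m) := by
    have hcancel : s ^ (m - 2) * s ^ (2 - m) = 1 := by
      rw [← rpow_add hs]; norm_num
    calc x ^ 2 = c⁻¹ * (c * x ^ 2 * s ^ (m - 2)) * s ^ (2 - m) := by
          rw [mul_assoc c, inv_mul_cancel_left₀ hc.ne', mul_assoc, hcancel, mul_one]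
      _ ≤ c⁻¹ * A * s ^ (2 - m) := by gcongr
  calc x ^ m = (x ^ 2) ^ (m / 2) := by
        rw [← rpow_natCast, ← rpow_mul hx]; congr 1; push_cast; ring
    _ ≤ (c⁻¹ * A * s ^ (2 - m)) ^ (m / 2) := by gcongr
    _ = c⁻¹ ^ (m / 2) * A ^ (m / 2) * (s ^ m) ^ ((2 - m) / 2) := by
        rw [mul_rpow (by positivity) (by positivity), mul_rpow (by positivity) hA,
          ← rpow_mul hs.le, ← rpow_mul hs.le]
        congr 2; ring

end Real

section InnerProductSpace

variable {E : Type*} [NormedAddCommGroup E] [InnerProductSpace ℝ E]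

theorem mul_norm_sub_sq_mul_rpow_le_inner_rpow_smul_sub {m : ℝ} (hm1 : 1 < m) (hm2 : m ≤ 2)
    (x y : E) :
    (m - 1) * ‖x - y‖ ^ 2 * (‖x‖ + ‖y‖) ^ (m - 2) ≤
      inner ℝ (‖x‖ ^ (m - 2) • x - ‖y‖ ^ (m - 2) • y) (x - y) := by
  set a := ‖x‖
  set b := ‖y‖
  set t := inner ℝ x y
  have hpow (c : ℝ) (hc : 0 ≤ c) :
      c ^ m = c ^ (m - 2) * c ^ 2 ∧ c ^ (m - 1) = c ^ (m - 2) * c := by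
    constructor
    · rw [← rpow_two, ← rpow_add' hc (by linarith)]; ring_nf
    · rw [← rpow_add_one' hc (by linarith)]; ring_nf
  obtain ⟨ha_m, ha_m1⟩ := hpow a (norm_nonneg x)
  obtain ⟨hb_m, hb_m1⟩ := hpow b (norm_nonneg y)
  have hinner : inner ℝ (a ^ (m - 2) • x - b ^ (m - 2) • y) (x - y)
      = a ^ (m - 2) * a ^ 2 + b ^ (m - 2) * b ^ 2 - (a ^ (m - 2) + b ^ (m - 2)) * t := by
    simp only [inner_sub_left, inner_sub_right, real_inner_smul_left, real_inner_self_eq_norm_sq,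
      real_inner_comm x y]
    ring
  have hnorm : ‖x - y‖ ^ 2 = a ^ 2 + b ^ 2 - 2 * t := by
    rw [norm_sub_sq_real]; ring
  have hradial := mul_sq_sub_mul_add_rpow_sub_one_le_sub_mul_rpow_sub_rpow (p := m - 1)
    (by linarith) (by linarith) (norm_nonneg x) (norm_nonneg y)
  rw [sub_sub, one_add_one_eq_two, ha_m1, hb_m1] at hradial
  have hangular :
      0 ≤ (a * b - t) * (a ^ (m - 2) + b ^ (m - 2) - 2 * (m - 1) * (a + b) ^ (m - 2)) := by
    -- With a zero vector the first factor vanishes; the second one may then be negative.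
    rcases eq_or_ne x 0 with rfl | hx
    · simp [a, t]
    rcases eq_or_ne y 0 with rfl | hy
    · simp [b, t]
    have ha : 0 < a := norm_pos_iff.2 hx
    have hb : 0 < b := norm_pos_iff.2 hy
    have hra : (a + b) ^ (m - 2) ≤ a ^ (m - 2) :=
      rpow_le_rpow_of_nonpos ha (by linarith) (by linarith)
    have hrb : (a + b) ^ (m - 2) ≤ b ^ (m - 2) :=
      rpow_le_rpow_of_nonpos hb (by linarith) (by linarith)
    have hr : 0 ≤ (a + b) ^ (m - 2) := by positivity
    exact mul_nonneg (sub_nonneg.2 (real_inner_le_norm x y)) (by nlinarith)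
  rw [hinner, hnorm]
  linear_combination hradial + hangular

end InnerProductSpace

theorem simon_subquadratic (N : ℕ) (m : ℝ) (hm1 : 1 < m) (hm2 : m < 2) :
    ∃ κ : ℝ, 0 < κ ∧ ∀ ξ η : EuclideanSpace ℝ (Fin N), (ξ ≠ 0 ∨ η ≠ 0) →
      ‖ξ - η‖ ^ m ≤
        κ * (inner ℝ ((‖ξ‖ ^ (m - 2)) • ξ - (‖η‖ ^ (m - 2)) • η) (ξ - η) : ℝ) ^ (m / 2)
          * (‖ξ‖ ^ m + ‖η‖ ^ m) ^ ((2 - m) / 2) := by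
  have hm1' : 0 < m - 1 := sub_pos.2 hm1
  refine ⟨(m - 1)⁻¹ ^ (m / 2) * (2 ^ (m - 1)) ^ ((2 - m) / 2), by positivity, ?_⟩
  intro ξ η hne
  have hs : 0 < ‖ξ‖ + ‖η‖ := by
    rcases hne with h | h
    · exact add_pos_of_pos_of_nonneg (norm_pos_iff.2 h) (norm_nonneg η)
    · exact add_pos_of_nonneg_of_pos (norm_nonneg ξ) (norm_pos_iff.2 h)
  set A := inner ℝ ((‖ξ‖ ^ (m - 2)) • ξ - (‖η‖ ^ (m - 2)) • η) (ξ - η)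
  have hmono := mul_norm_sub_sq_mul_rpow_le_inner_rpow_smul_sub hm1 hm2.le ξ η
  have hA : 0 ≤ A := le_trans (by positivity) hmono
  have hmean : ((‖ξ‖ + ‖η‖) ^ m) ^ ((2 - m) / 2)
      ≤ (2 ^ (m - 1)) ^ ((2 - m) / 2) * (‖ξ‖ ^ m + ‖η‖ ^ m) ^ ((2 - m) / 2) := by
    rw [← mul_rpow (by positivity) (by positivity)]
    exact rpow_le_rpow (by positivity)
      (rpow_add_le_mul_rpow_add_rpow (norm_nonneg ξ) (norm_nonneg η) hm1.le) (by linarith)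
  calc ‖ξ - η‖ ^ m
      ≤ (m - 1)⁻¹ ^ (m / 2) * A ^ (m / 2) * ((‖ξ‖ + ‖η‖) ^ m) ^ ((2 - m) / 2) :=
        rpow_le_of_mul_sq_mul_rpow_le (by linarith) hm1' (norm_nonneg _) hs hmono
    _ ≤ (m - 1)⁻¹ ^ (m / 2) * A ^ (m / 2)
          * ((2 ^ (m - 1)) ^ ((2 - m) / 2) * (‖ξ‖ ^ m + ‖η‖ ^ m) ^ ((2 - m) / 2)) := by
        have hA' := rpow_nonneg hA (m / 2)
        gcongr
    _ = _ := by ring
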